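/- Let i ≥ 1, t ∈ ℝ, τ₀ > 0, and let ξ : ℝ → ℝ be (i+2)-times continuously differentiable on [t − iτ₀, t]. Then there exists a constant C ≥ 0 such that for all τ ∈ (0, τ₀], |ξ^{(i)}(t) − ∇^i_τ ξ(t)| ≤ τ · |(ξ^{(i+1)}(t) / (i+1)!) · Σ_{j=0}^{i} (−1)^j · (i choose j) · (−j)^{i+1}| + C · τ². -/

import Mathlib

/-!
Expand `ξ` by Taylor's formula about the right endpoint `t` to order `i + 1`; at each node
`t - jτ` the remainder is `O((jτ)^(i+2))`. Replacing `ξ` by the monomial `(x - t)^k` in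
`Σ_j (-1)^j C(i,j) ξ(t - jτ)` gives `τ^k` times the moment `Σ_j (-1)^j C(i,j) (-j)^k`, which is
`± Δ^i (r ↦ r^k) (0)`: it vanishes for `k < i` and equals `i!` for `k = i`. So the Taylor
polynomial contributes exactly `ξ^(i)(t)` plus the first-order term, and the remainder, divided
by `τ^i`, is `O(τ²)`.
-/

/-- The backward-difference approximation of the `i`-th derivative of `ξ` at `t`
with step size `τ`: `∇^i_τ ξ(t) = τ^{-i} · Σ_{j=0}^{i} (-1)^j (i choose j) ξ(t - jτ)`. -/
noncomputable def bdApprox (ξ : ℝ → ℝ) (τ : ℝ) (i : ℕ) (t : ℝ) : ℝ :=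
  τ ^ (-(i : ℤ)) *
    ∑ j ∈ Finset.range (i + 1), (-1 : ℝ) ^ j * (i.choose j : ℝ) * ξ (t - j * τ)

open Finset Set Pointwise Function
open scoped fwdDiff Nat

section Taylor

variable {E : Type*} [NormedAddCommGroup E] [NormedSpace ℝ E]

theorem taylorWithinEval_comp_const_sub (f : ℝ → E) (n : ℕ) (s : Set ℝ) (c x₀ x : ℝ) :
    taylorWithinEval (fun y => f (c - y)) n s x₀ x
      = taylorWithinEval f n (c +ᵥ -s) (c - x₀) (c - x) := by
  simp only [taylor_within_apply, iteratedDerivWithin_comp_const_sub, smul_smul]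
  refine sum_congr rfl fun k _ => ?_
  congr 1
  rw [mul_assoc, ← mul_pow]
  ring_nf

theorem exists_taylor_mean_remainder_bound_right {f : ℝ → E} {a b : ℝ} {n : ℕ} (hab : a ≤ b)
    (hf : ContDiffOn ℝ (n + 1) f (Icc a b)) :
    ∃ C, ∀ x ∈ Icc a b, ‖f x - taylorWithinEval f n (Icc a b) b x‖ ≤ C * (b - x) ^ (n + 1) := by
  have hmaps : MapsTo (fun y => b - y) (Icc 0 (b - a)) (Icc a b) := fun y hy => by
    simp only [Set.mem_Icc] at hy ⊢; constructor <;> linarith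
  obtain ⟨C, hC⟩ := exists_taylor_mean_remainder_bound (sub_nonneg.2 hab)
    (hf.comp (contDiff_const.sub contDiff_id).contDiffOn hmaps)
  refine ⟨C, fun x hx => ?_⟩
  have hx' : b - x ∈ Icc 0 (b - a) := by
    simp only [Set.mem_Icc] at hx ⊢; constructor <;> linarith
  have hrefl : b +ᵥ -Icc 0 (b - a) = Icc a b := by simp
  simpa [Function.comp_def, taylorWithinEval_comp_const_sub, hrefl] using hC (b - x) hx'

end Taylor

def bdStencilMoment (i k : ℕ) : ℝ :=
  ∑ j ∈ range (i + 1), (-1 : ℝ) ^ j * (i.choose j : ℝ) * (-(j : ℝ)) ^ k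

theorem bdStencilMoment_eq_fwdDiff_iter (i k : ℕ) :
    bdStencilMoment i k = (-1) ^ (i + k) * (Δ_[1])^[i] (fun r : ℝ => r ^ k) 0 := by
  rw [fwdDiff_iter_eq_sum_shift, mul_sum, bdStencilMoment]
  refine sum_congr rfl fun j hj => ?_
  obtain ⟨l, rfl⟩ := Nat.exists_eq_add_of_le (mem_range_succ_iff.1 hj)
  simp only [zsmul_eq_mul, Int.cast_mul, Int.cast_pow, Int.cast_neg, Int.cast_one,
    Int.cast_natCast, nsmul_eq_mul, mul_one, zero_add, neg_pow (j : ℝ), Nat.add_sub_cancel_left]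
  have hsq : (-1 : ℝ) ^ l * (-1) ^ l = 1 := by rw [← mul_pow]; simp
  linear_combination (-(-1 : ℝ) ^ (j + k) * ((j + l).choose j : ℝ) * (j : ℝ) ^ k) * hsq

theorem bdStencilMoment_of_lt {i k : ℕ} (h : k < i) : bdStencilMoment i k = 0 := by
  simp [bdStencilMoment_eq_fwdDiff_iter, fwdDiff_iter_pow_eq_zero_of_lt h]

theorem bdStencilMoment_self (i : ℕ) : bdStencilMoment i i = i ! := by
  simp [bdStencilMoment_eq_fwdDiff_iter, fwdDiff_iter_eq_factorial, ← two_mul, pow_mul]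

theorem bdApprox_sub (f g : ℝ → ℝ) (τ : ℝ) (i : ℕ) (t : ℝ) :
    bdApprox (fun x => f x - g x) τ i t = bdApprox f τ i t - bdApprox g τ i t := by
  simp only [bdApprox, mul_sub, sum_sub_distrib]

theorem abs_bdApprox_le {f : ℝ → ℝ} {τ M t : ℝ} {i k : ℕ} (hτ : 0 < τ)
    (hf : ∀ j ∈ range (i + 1), |f (t - j * τ)| ≤ M * (j * τ) ^ (i + k)) :
    |bdApprox f τ i t| ≤ M * (∑ j ∈ range (i + 1), (i.choose j : ℝ) * (j : ℝ) ^ (i + k)) * τ ^ k := by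
  have hsum : |∑ j ∈ range (i + 1), (-1 : ℝ) ^ j * (i.choose j : ℝ) * f (t - j * τ)|
      ≤ ∑ j ∈ range (i + 1), (i.choose j : ℝ) * (M * (j * τ) ^ (i + k)) := by
    refine (abs_sum_le_sum_abs _ _).trans (sum_le_sum fun j hj => ?_)
    rw [abs_mul, abs_mul, abs_pow, abs_neg, abs_one, one_pow, one_mul, Nat.abs_cast]
    exact mul_le_mul_of_nonneg_left (hf j hj) (Nat.cast_nonneg _)
  rw [bdApprox, abs_mul, zpow_neg, zpow_natCast, abs_inv, abs_of_pos (pow_pos hτ i)]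
  calc (τ ^ i)⁻¹ * |∑ j ∈ range (i + 1), (-1 : ℝ) ^ j * (i.choose j : ℝ) * f (t - j * τ)|
      ≤ (τ ^ i)⁻¹ * ∑ j ∈ range (i + 1), (i.choose j : ℝ) * (M * (j * τ) ^ (i + k)) := by
        gcongr
    _ = _ := by
        rw [mul_sum, mul_sum, sum_mul]
        refine sum_congr rfl fun j _ => ?_
        field_simp
        ring

theorem sum_bdStencil_mul_taylorWithinEval (f : ℝ → ℝ) (n i : ℕ) (s : Set ℝ) (τ t : ℝ) :
    ∑ j ∈ range (i + 1), (-1 : ℝ) ^ j * (i.choose j : ℝ) * taylorWithinEval f n s t (t - j * τ)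
      = ∑ k ∈ range (n + 1),
          iteratedDerivWithin k f s t * τ ^ k / k ! * bdStencilMoment i k := by
  simp only [taylor_within_apply, smul_eq_mul, mul_sum, bdStencilMoment]
  rw [sum_comm]
  refine sum_congr rfl fun k _ => sum_congr rfl fun j _ => ?_
  ring

theorem bdApprox_taylorWithinEval (f : ℝ → ℝ) (i : ℕ) (s : Set ℝ) {τ : ℝ} (hτ : τ ≠ 0) (t : ℝ) :
    bdApprox (taylorWithinEval f (i + 1) s t) τ i t
      = iteratedDerivWithin i f s t
        + τ * (iteratedDerivWithin (i + 1) f s t / (i + 1)! * bdStencilMoment i (i + 1)) := by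
  rw [bdApprox, sum_bdStencil_mul_taylorWithinEval, sum_range_succ, sum_range_succ,
    sum_eq_zero fun k hk => by rw [bdStencilMoment_of_lt (mem_range.1 hk), mul_zero],
    bdStencilMoment_self, zpow_neg, zpow_natCast]
  field_simp
  ring

theorem bdApprox_error_first_order_term_general (i : ℕ) (t τ₀ : ℝ) (hτ₀ : 0 < τ₀)
    (ξ : ℝ → ℝ)
    (hξ : ContDiffOn ℝ (i + 2) ξ (Set.Icc (t - i * τ₀) t)) :
    ∃ C : ℝ, 0 ≤ C ∧ ∀ τ ∈ Set.Ioc (0 : ℝ) τ₀,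
      |iteratedDerivWithin i ξ (Set.Icc (t - i * τ₀) t) t - bdApprox ξ τ i t|
        ≤ τ * |iteratedDerivWithin (i + 1) ξ (Set.Icc (t - i * τ₀) t) t
                / ((i + 1).factorial : ℝ) *
                ∑ j ∈ Finset.range (i + 1),
                  (-1 : ℝ) ^ j * (i.choose j : ℝ) * (-(j : ℝ)) ^ (i + 1)|
          + C * τ ^ 2 := by
  set S := Icc (t - i * τ₀) t
  have hξ' : ContDiffOn ℝ ((i + 1 : ℕ) + 1) ξ S := by convert hξ using 1; push_cast; ring
  obtain ⟨M, hM⟩ := exists_taylor_mean_remainder_bound_right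
    (sub_le_self _ (by positivity)) hξ'
  refine ⟨max M 0 * ∑ j ∈ range (i + 1), (i.choose j : ℝ) * (j : ℝ) ^ (i + 2), by positivity, ?_⟩
  rintro τ ⟨hτ, hττ₀⟩
  have hrem : |bdApprox (fun x => ξ x - taylorWithinEval ξ (i + 1) S t x) τ i t|
      ≤ max M 0 * (∑ j ∈ range (i + 1), (i.choose j : ℝ) * (j : ℝ) ^ (i + 2)) * τ ^ 2 := by
    refine abs_bdApprox_le hτ fun j hj => ?_
    have hji : (j : ℝ) ≤ i := by exact_mod_cast mem_range_succ_iff.1 hj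
    have hmem : t - j * τ ∈ S := ⟨by gcongr, sub_le_self _ (by positivity)⟩
    calc |ξ (t - j * τ) - taylorWithinEval ξ (i + 1) S t (t - j * τ)|
        ≤ M * (j * τ) ^ (i + 1 + 1) := by simpa using hM _ hmem
      _ ≤ max M 0 * (j * τ) ^ (i + 2) := by gcongr; exact le_max_left _ _
  rw [bdApprox_sub, bdApprox_taylorWithinEval ξ i S hτ.ne'] at hrem
  set d := iteratedDerivWithin i ξ S t
  set c := τ * (iteratedDerivWithin (i + 1) ξ S t / (i + 1)! * bdStencilMoment i (i + 1))
  calc |d - bdApprox ξ τ i t| = |c + (bdApprox ξ τ i t - (d + c))| := by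
        rw [abs_sub_comm]; congr 1; ring
    _ ≤ |c| + |bdApprox ξ τ i t - (d + c)| := abs_add_le _ _
    _ ≤ _ := by rw [abs_mul, abs_of_pos hτ]; exact add_le_add le_rfl hrem

/-- Paper's Lemma 1: the first-order error term of the backward-difference
approximation is explicit, with an `O(τ²)` remainder. -/
theorem bdApprox_error_first_order_term (i : ℕ) (hi : 1 ≤ i) (t τ₀ : ℝ) (hτ₀ : 0 < τ₀)
    (ξ : ℝ → ℝ)
    (hξ : ContDiffOn ℝ (i + 2) ξ (Set.Icc (t - i * τ₀) t)) :
    ∃ C : ℝ, 0 ≤ C ∧ ∀ τ ∈ Set.Ioc (0 : ℝ) τ₀,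
      |iteratedDerivWithin i ξ (Set.Icc (t - i * τ₀) t) t - bdApprox ξ τ i t|
        ≤ τ * |iteratedDerivWithin (i + 1) ξ (Set.Icc (t - i * τ₀) t) t
                / ((i + 1).factorial : ℝ) *
                ∑ j ∈ Finset.range (i + 1),
                  (-1 : ℝ) ^ j * (i.choose j : ℝ) * (-(j : ℝ)) ^ (i + 1)|
          + C * τ ^ 2 :=
  bdApprox_error_first_order_term_general i t τ₀ hτ₀ ξ hξ
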